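/- arXiv:2509.19409 — 4 statements merged into one kernel-verified Lean document; each statement's English description precedes it below -/
import Mathlib

section
/- Let H be a compact Lie group with identity component H_e. The map on closed subgroups of H sending K to K ∩ H_e is continuous for the Hausdorff metric topology: if a sequence of closed subgroups K_i converges to K in the Hausdorff metric, then K_i ∩ H_e converges to K ∩ H_e in the Hausdorff metric. -/
open Metric Set

lemma exists_isConnected_isOpen_mem {E : Type*} [NormedAddCommGroup E] [NormedSpace ℝ E]
    {M : Type*} [TopologicalSpace M] (I : ModelWithCorners ℝ E M)
    {H : Type*} [TopologicalSpace H] [ChartedSpace M H] (x : H) :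
    ∃ s : Set H, IsConnected s ∧ IsOpen s ∧ s.Nonempty := by
  set e := extChartAt I x with he
  obtain ⟨p, hp⟩ := interior_extChartAt_target_nonempty (I := I) x
  obtain ⟨r, hr, hball⟩ := (Metric.isOpen_iff.1 isOpen_interior) p hp
  have hball' : ball p r ⊆ e.target := hball.trans interior_subset
  have himg : e.symm '' ball p r = e.source ∩ e ⁻¹' ball p r :=
    e.symm_image_eq_source_inter_preimage hball'
  refine ⟨e.symm '' ball p r, ?_, ?_, ?_⟩
  · exact ((convex_ball p r).isConnected (nonempty_ball.2 hr)).image _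
      ((continuousOn_extChartAt_symm x).mono hball')
  · rw [himg]
    exact (continuousOn_extChartAt x).isOpen_inter_preimage (isOpen_extChartAt_source x)
      isOpen_ball
  · exact ⟨e.symm p, ⟨p, mem_ball_self hr, rfl⟩⟩

/-- In a Lie group, the identity component is open. -/
lemma isOpen_connectedComponent_one_lie {E : Type*} [NormedAddCommGroup E] [NormedSpace ℝ E]
    {M : Type*} [TopologicalSpace M] (I : ModelWithCorners ℝ E M)
    {H : Type*} [TopologicalSpace H] [Group H] [ChartedSpace M H] [LieGroup I (⊤ : ℕ∞) H] :
    IsOpen (connectedComponent (1 : H)) := by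
  haveI : IsTopologicalGroup H := topologicalGroup_of_lieGroup I ((⊤ : ℕ∞) : WithTop ℕ∞)
  obtain ⟨s, hsc, hso, x0, hx0⟩ := exists_isConnected_isOpen_mem I (1 : H)
  set t : Set H := (fun h => x0⁻¹ * h) '' s with ht
  have htc : IsConnected t := hsc.image _ (continuous_mul_left _).continuousOn
  have hto : IsOpen t := (Homeomorph.mulLeft x0⁻¹).isOpenMap s hso
  have h1t : (1 : H) ∈ t := ⟨x0, hx0, inv_mul_cancel x0⟩
  have hsub : t ⊆ connectedComponent (1 : H) :=
    htc.isPreconnected.subset_connectedComponent h1t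
  have : (Subgroup.connectedComponentOfOne H : Set H) ∈ nhds (1 : H) :=
    Filter.mem_of_superset (hto.mem_nhds h1t) hsub
  exact Subgroup.isOpen_of_mem_nhds _ this

/-- Let `H` be a compact Lie group (with a bi-invariant metric
inducing its topology) with identity component `H_e` (the connected component of
the identity).  The map on closed subgroups `K ↦ K ∩ H_e` is continuous for the
Hausdorff metric: if closed subgroups `K_i` converge to `K` in the Hausdorff
metric, then `K_i ∩ H_e` converges to `K ∩ H_e` in the Hausdorff metric. -/
theorem stmt5 {E : Type*} [NormedAddCommGroup E] [NormedSpace ℝ E]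
    [FiniteDimensional ℝ E]
    {M : Type*} [TopologicalSpace M] (I : ModelWithCorners ℝ E M)
    {H : Type*} [MetricSpace H] [Group H] [ChartedSpace M H] [LieGroup I (⊤ : ℕ∞) H]
    [CompactSpace H]
    (hinvL : ∀ g x y : H, dist (g * x) (g * y) = dist x y)
    (hinvR : ∀ g x y : H, dist (x * g) (y * g) = dist x y)
    (Ki : ℕ → Subgroup H) (hKi : ∀ i, IsClosed ((Ki i : Set H)))
    (K : Subgroup H) (hK : IsClosed ((K : Set H)))
    (hconv : Filter.Tendsto
      (fun i => Metric.hausdorffDist ((Ki i : Set H)) ((K : Set H)))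
      Filter.atTop (nhds 0)) :
    Filter.Tendsto
      (fun i => Metric.hausdorffDist
        ((Ki i : Set H) ∩ connectedComponent (1 : H))
        ((K : Set H) ∩ connectedComponent (1 : H)))
      Filter.atTop (nhds 0) := by
  set C : Set H := connectedComponent (1 : H) with hC
  have hCopen : IsOpen C := isOpen_connectedComponent_one_lie I
  have hCcomp : IsCompact C := isClosed_connectedComponent.isCompact
  obtain ⟨δ, δpos, hδ⟩ := hCcomp.exists_thickening_subset_open hCopen (subset_refl C)
  have key : ∀ x y : H, x ∈ C → dist x y < δ → y ∈ C := fun x y hx hd =>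
    hδ (Metric.mem_thickening_iff.mpr ⟨x, hx, by rwa [dist_comm]⟩)
  have fin : ∀ i, EMetric.hausdorffEdist ((Ki i : Set H)) ((K : Set H)) ≠ ⊤ := fun i =>
    Metric.hausdorffEdist_ne_top_of_nonempty_of_bounded ⟨1, (Ki i).one_mem⟩ ⟨1, K.one_mem⟩
      (Metric.isBounded_of_compactSpace) (Metric.isBounded_of_compactSpace)
  rw [Metric.tendsto_atTop] at hconv ⊢
  intro ε hε
  have rpos : 0 < min δ ε / 2 := by positivity
  obtain ⟨N, hN⟩ := hconv (min δ ε / 2) rpos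
  refine ⟨N, fun n hn => ?_⟩
  have hd : Metric.hausdorffDist ((Ki n : Set H)) ((K : Set H)) < min δ ε / 2 := by
    have := hN n hn
    rwa [Real.dist_0_eq_abs, abs_of_nonneg Metric.hausdorffDist_nonneg] at this
  have hrδ : min δ ε / 2 < δ := by
    have := min_le_left δ ε; linarith
  have h1 : ∀ x ∈ (Ki n : Set H) ∩ C, Metric.infDist x ((K : Set H) ∩ C) ≤ min δ ε / 2 := by
    rintro x ⟨hxK, hxC⟩
    obtain ⟨y, hyK, hxy⟩ := Metric.exists_dist_lt_of_hausdorffDist_lt hxK hd (fin n)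
    have hyC : y ∈ C := key x y hxC (hxy.trans hrδ)
    exact (Metric.infDist_le_dist_of_mem (Set.mem_inter hyK hyC)).trans hxy.le
  have h2 : ∀ x ∈ (K : Set H) ∩ C, Metric.infDist x ((Ki n : Set H) ∩ C) ≤ min δ ε / 2 := by
    rintro x ⟨hxK, hxC⟩
    obtain ⟨y, hyK, hxy⟩ := Metric.exists_dist_lt_of_hausdorffDist_lt' hxK hd (fin n)
    have hxy' : dist x y < (min δ ε) / 2 := by rwa [dist_comm] at hxy
    have hyC : y ∈ C := key x y hxC (hxy'.trans hrδ)
    exact (Metric.infDist_le_dist_of_mem (Set.mem_inter hyK hyC)).trans hxy'.le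
  have hle := Metric.hausdorffDist_le_of_infDist rpos.le h1 h2
  rw [Real.dist_0_eq_abs, abs_of_nonneg Metric.hausdorffDist_nonneg]
  have := min_le_right δ ε
  linarith
end

section
/- Let G be a group and let H, K be subgroups of G such that N_G(K) ⊆ N_G(H). Then N_G(K) ∩ H = N_H(K) is a normal subgroup of N_G(K), and there is an injective group homomorphism from the quotient N_G(K)/(N_G(K) ∩ H) into the Weyl group W_G(H) = N_G(H)/H. Consequently, if W_G(H) = N_G(H)/H is finite and W_H(K) = N_H(K)/K is finite, then W_G(K) = N_G(K)/K is finite. -/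
/-- Let `G` be a group and `H, K` subgroups with
`N_G(K) ≤ N_G(H)`.  Then `N_H(K) = H ⊓ N_G(K)` is a normal subgroup of `N_G(K)`,
there is an injective group homomorphism
`N_G(K)/(H ⊓ N_G(K)) ↪ W_G(H) = N_G(H)/H`, and consequently (for `K ≤ H`) if
`W_G(H) = N_G(H)/H` and `W_H(K) = N_H(K)/K` are finite then so is
`W_G(K) = N_G(K)/K`. -/
theorem stmt7 {G : Type*} [Group G] (H K : Subgroup G)
    (hle : (Subgroup.normalizer (K : Set G)) ≤ (Subgroup.normalizer (H : Set G))) :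
    ((H ⊓ (Subgroup.normalizer (K : Set G))).subgroupOf (Subgroup.normalizer (K : Set G))).Normal ∧
    (∀ [inst : ((H ⊓ (Subgroup.normalizer (K : Set G))).subgroupOf (Subgroup.normalizer (K : Set G))).Normal],
      ∃ f : ((Subgroup.normalizer (K : Set G)) ⧸ (H ⊓ (Subgroup.normalizer (K : Set G))).subgroupOf (Subgroup.normalizer (K : Set G))) →*
          ((Subgroup.normalizer (H : Set G)) ⧸ H.subgroupOf (Subgroup.normalizer (H : Set G))), Function.Injective f) ∧
    (K ≤ H → Finite ((Subgroup.normalizer (H : Set G)) ⧸ H.subgroupOf (Subgroup.normalizer (H : Set G))) →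
      Finite (↥(H ⊓ (Subgroup.normalizer (K : Set G))) ⧸ K.subgroupOf (H ⊓ (Subgroup.normalizer (K : Set G)))) →
      Finite ((Subgroup.normalizer (K : Set G)) ⧸ K.subgroupOf (Subgroup.normalizer (K : Set G)))) := by
  set N := Subgroup.normalizer (K : Set G) with hN
  -- the homomorphism N_G(K) → N_G(H)/H
  let φ : ↥N →* ((Subgroup.normalizer (H : Set G)) ⧸ H.subgroupOf (Subgroup.normalizer (H : Set G))) :=
    (QuotientGroup.mk' _).comp (Subgroup.inclusion hle)
  have hker : φ.ker = (H ⊓ N).subgroupOf N := by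
    ext x
    simp only [φ, MonoidHom.mem_ker, MonoidHom.comp_apply, QuotientGroup.mk'_apply,
      QuotientGroup.eq_one_iff, Subgroup.mem_subgroupOf, Subgroup.mem_inf,
      Subgroup.coe_inclusion]
    exact (and_iff_left x.2).symm
  have hnormal : ((H ⊓ N).subgroupOf N).Normal := hker ▸ φ.normal_ker
  refine ⟨hnormal, ?_, ?_⟩
  · intro _
    exact ⟨(QuotientGroup.kerLift φ).comp
        (QuotientGroup.quotientMulEquivOfEq hker.symm).toMonoidHom,
      (QuotientGroup.kerLift_injective φ).comp
        (QuotientGroup.quotientMulEquivOfEq hker.symm).injective⟩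
  · intro hKH hfin1 hfin2
    have hK : K ≤ H ⊓ N := le_inf hKH (Subgroup.le_normalizer (H := K))
    have hfin3 : Finite (↥N ⧸ (H ⊓ N).subgroupOf N) := by
      rw [← hker]
      exact Finite.of_injective _ (QuotientGroup.kerLift_injective φ)
    have h1 : (H ⊓ N).relIndex N ≠ 0 := Subgroup.index_ne_zero_of_finite
    have h2 : K.relIndex (H ⊓ N) ≠ 0 := Subgroup.index_ne_zero_of_finite
    have h3 : K.relIndex N ≠ 0 := by
      rw [← Subgroup.relIndex_mul_relIndex (H := K) (K := H ⊓ N) (L := N) hK inf_le_right]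
      exact Nat.mul_ne_zero h2 h1
    have : Nat.card (↥N ⧸ K.subgroupOf N) ≠ 0 := h3
    exact Nat.finite_of_card_ne_zero this
end

section
/- Let H be a compact Lie group, Σ a closed normal subgroup of H, and p : H → H/Σ the quotient homomorphism. Then the map K ↦ p(K) is a bijection from the set Sub_Σ(H) of closed subgroups of H containing Σ onto the set Sub(H/Σ) of closed subgroups of H/Σ; it is equivariant for conjugation (p(gKg⁻¹) = p(g)p(K)p(g)⁻¹); it is a homeomorphism for the Hausdorff metric topologies; and it preserves cotoral inclusions (for Σ ⊆ K ⊆ K', K is cotoral in K' if and only if p(K) is cotoral in p(K')). Consequently it induces a homeomorphism Sub_Σ(H)/H ≅ Sub(H/Σ)/(H/Σ) of the quotient spaces of conjugacy classes. -/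
open Pointwise Topology

section Defs

variable (G : Type*) [MetricSpace G] [Group G] [CompactSpace G]

/-- The set `Sub(G)` of closed subgroups of `G`. -/
def ClosedSub := {K : Subgroup G // IsClosed (K : Set G)}

variable {G}

/-- A closed subgroup of a compact group, as a nonempty compact subset. -/
def ClosedSub.toNC (K : ClosedSub G) : TopologicalSpace.NonemptyCompacts G :=
  ⟨⟨(K.1 : Set G), K.2.isCompact⟩, ⟨1, K.1.one_mem⟩⟩

/-- The Hausdorff metric topology on `Sub(G)`. -/
instance : TopologicalSpace (ClosedSub G) :=
  TopologicalSpace.induced ClosedSub.toNC inferInstance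

variable (G)

/-- Conjugacy of closed subgroups. -/
def conjSetoid : Setoid (ClosedSub G) where
  r K L := ∃ g : ConjAct G, g • K.1 = L.1
  iseqv := ⟨fun _ => ⟨1, one_smul _ _⟩,
    fun ⟨g, h⟩ => ⟨g⁻¹, by rw [← h, inv_smul_smul]⟩,
    fun ⟨g, h⟩ ⟨g', h'⟩ => ⟨g' * g, by rw [mul_smul, h, h']⟩⟩

/-- The space `Sub(G)/G` of conjugacy classes of closed subgroups, with the
quotient (h-)topology. -/
def SubQuot := Quotient (conjSetoid G)

instance : TopologicalSpace (SubQuot G) := instTopologicalSpaceQuotient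

variable {G}

/-- `L` is cotoral in `K`: `L ≤ K`, `L` is normal in `K` and the quotient group
`K/L` is a torus, i.e. (being automatically a compact Lie group) connected and
abelian. -/
def ClosedSub.Cotoral (L K : ClosedSub G) : Prop :=
  L.1 ≤ K.1 ∧ (L.1.subgroupOf K.1).Normal ∧
    ConnectedSpace (↥K.1 ⧸ L.1.subgroupOf K.1) ∧
    ∀ x y : ↥K.1, (QuotientGroup.mk (x * y) : ↥K.1 ⧸ L.1.subgroupOf K.1) =
      QuotientGroup.mk (y * x)

end Defs

section QuotientConstructions

variable {H : Type*} [MetricSpace H] [Group H] [CompactSpace H]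
variable {Q : Type*} [MetricSpace Q] [Group Q] [CompactSpace Q]

/-- The image of a closed subgroup under a continuous homomorphism to a compact
(Hausdorff) group is a closed subgroup. -/
def pushSub (p : H →* Q) (hp : Continuous p) (K : ClosedSub H) : ClosedSub Q :=
  ⟨K.1.map p, by
    rw [Subgroup.coe_map]
    exact (K.2.isCompact.image hp).isClosed⟩

variable (S : Subgroup H)

/-- `Sub_Σ(H)`: the closed subgroups of `H` containing `Σ`, with the subspace
(Hausdorff metric) topology. -/
abbrev SubSigma := {K : ClosedSub H // S ≤ K.1}

/-- Conjugacy of closed subgroups containing `Σ`. -/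
def conjSetoidSigma : Setoid (SubSigma S) where
  r K L := ∃ g : ConjAct H, g • K.1.1 = L.1.1
  iseqv := ⟨fun _ => ⟨1, one_smul _ _⟩,
    fun ⟨g, h⟩ => ⟨g⁻¹, by rw [← h, inv_smul_smul]⟩,
    fun ⟨g, h⟩ ⟨g', h'⟩ => ⟨g' * g, by rw [mul_smul, h, h']⟩⟩

/-- The space `Sub_Σ(H)/H` of `H`-conjugacy classes of closed subgroups of `H`
containing `Σ`, with the quotient topology. -/
def SubQuotSigma := Quotient (conjSetoidSigma S)

instance : TopologicalSpace (SubQuotSigma S) := instTopologicalSpaceQuotient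

end QuotientConstructions


namespace Stmt11Aux

open Metric TopologicalSpace

section NC

variable {H : Type*} [MetricSpace H] [CompactSpace H]
variable {Q : Type*} [MetricSpace Q] [CompactSpace Q]

lemma edist_ne_top (X Y : NonemptyCompacts H) :
    EMetric.hausdorffEdist (X : Set H) (Y : Set H) ≠ ⊤ :=
  hausdorffEdist_ne_top_of_nonempty_of_bounded X.nonempty Y.nonempty
    X.isCompact.isBounded Y.isCompact.isBounded

/-- image map on nonempty compacts -/
def ncMap (f : H → Q) (hf : Continuous f) (A : NonemptyCompacts H) : NonemptyCompacts Q :=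
  ⟨⟨f '' A, A.isCompact.image hf⟩, A.nonempty.image f⟩

lemma continuous_ncMap (f : H → Q) (hf : Continuous f) : Continuous (ncMap f hf) := by
  rw [Metric.continuous_iff]
  intro A ε hε
  obtain ⟨δ, hδ, hδ'⟩ := Metric.uniformContinuous_iff.1
    (CompactSpace.uniformContinuous_of_continuous hf) (ε / 2) (by positivity)
  refine ⟨δ, hδ, fun B hB => ?_⟩
  rw [NonemptyCompacts.dist_eq] at hB
  have key : dist (ncMap f hf B) (ncMap f hf A) ≤ ε / 2 := by
    rw [NonemptyCompacts.dist_eq]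
    apply hausdorffDist_le_of_mem_dist (by positivity)
    · rintro _ ⟨x, hx, rfl⟩
      obtain ⟨y, hy, hxy⟩ := exists_dist_lt_of_hausdorffDist_lt hx hB (edist_ne_top B A)
      exact ⟨f y, Set.mem_image_of_mem f hy, (hδ' hxy).le⟩
    · rintro _ ⟨y, hy, rfl⟩
      obtain ⟨x, hx, hxy⟩ := exists_dist_lt_of_hausdorffDist_lt' hy hB (edist_ne_top B A)
      exact ⟨f x, Set.mem_image_of_mem f hx, by rw [dist_comm]; exact (hδ' hxy).le⟩
  linarith

lemma approx (u : ℕ → NonemptyCompacts H) (A : NonemptyCompacts H)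
    (hlim : Filter.Tendsto u Filter.atTop (nhds A)) (x : H) (hx : x ∈ (A : Set H)) :
    ∃ w : ℕ → H, (∀ n, w n ∈ (u n : Set H)) ∧ Filter.Tendsto w Filter.atTop (nhds x) := by
  have h := fun n => (u n).isCompact.exists_infDist_eq_dist (u n).nonempty x
  choose w hw hwd using h
  refine ⟨w, hw, tendsto_iff_dist_tendsto_zero.2 ?_⟩
  have hd : Filter.Tendsto (fun n => dist (u n) A) Filter.atTop (nhds 0) :=
    tendsto_iff_dist_tendsto_zero.1 hlim
  apply squeeze_zero (fun n => dist_nonneg) (g := fun n => dist (u n) A) _ hd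
  intro n
  rw [dist_comm, ← hwd n]
  calc infDist x (u n : Set H) ≤ infDist x (A : Set H) + hausdorffDist (A : Set H) (u n : Set H) :=
        infDist_le_infDist_add_hausdorffDist (edist_ne_top A (u n))
    _ = hausdorffDist (A : Set H) (u n : Set H) := by rw [infDist_zero_of_mem hx, zero_add]
    _ = dist (u n) A := by rw [NonemptyCompacts.dist_eq, hausdorffDist_comm]

end NC

section Group

variable {H : Type*} [MetricSpace H] [Group H] [IsTopologicalGroup H] [CompactSpace H]

lemma isClosed_subLike (S : Subgroup H) :
    IsClosed {A : NonemptyCompacts H | (S : Set H) ⊆ (A : Set H) ∧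
      ∀ x ∈ (A : Set H), ∀ y ∈ (A : Set H), x * y⁻¹ ∈ (A : Set H)} := by
  refine IsSeqClosed.isClosed ?_
  rintro u A hu hlim
  have hd : Filter.Tendsto (fun n => dist (u n) A) Filter.atTop (nhds 0) :=
    tendsto_iff_dist_tendsto_zero.1 hlim
  constructor
  · intro s hs
    have h1 : ∀ n, infDist s ((u n : Set H)) = 0 := fun n => infDist_zero_of_mem ((hu n).1 hs)
    have hc : Continuous fun X : NonemptyCompacts H => infDist s (X : Set H) :=
      (lipschitz_infDist_set s).continuous
    have h2 : Filter.Tendsto (fun n => infDist s ((u n : Set H))) Filter.atTop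
        (nhds (infDist s (A : Set H))) := (hc.continuousAt.tendsto).comp hlim
    simp only [h1] at h2
    have h3 : infDist s (A : Set H) = 0 := tendsto_nhds_unique h2 tendsto_const_nhds
    exact (A.isCompact.isClosed.mem_iff_infDist_zero A.nonempty).2 h3
  · intro x hx y hy
    obtain ⟨w, hw, hwt⟩ := approx u A hlim x hx
    obtain ⟨v, hv, hvt⟩ := approx u A hlim y hy
    set z : ℕ → H := fun n => w n * (v n)⁻¹ with hz
    have hzmem : ∀ n, z n ∈ (u n : Set H) := fun n => (hu n).2 _ (hw n) _ (hv n)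
    have hzt : Filter.Tendsto z Filter.atTop (nhds (x * y⁻¹)) := hwt.mul hvt.inv
    have h4 : Filter.Tendsto (fun n => infDist (z n) (A : Set H)) Filter.atTop
        (nhds (infDist (x * y⁻¹) (A : Set H))) :=
      ((continuous_infDist_pt (A : Set H)).continuousAt.tendsto).comp hzt
    have h5 : infDist (x * y⁻¹) (A : Set H) ≤ 0 := by
      refine le_of_tendsto_of_tendsto h4 hd (Filter.Eventually.of_forall fun n => ?_)
      calc infDist (z n) (A : Set H)
          ≤ infDist (z n) ((u n : Set H)) + hausdorffDist ((u n : Set H)) (A : Set H) :=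
            infDist_le_infDist_add_hausdorffDist (edist_ne_top (u n) A)
        _ = dist (u n) A := by
            rw [infDist_zero_of_mem (hzmem n), zero_add, NonemptyCompacts.dist_eq]
    have h6 : infDist (x * y⁻¹) (A : Set H) = 0 := le_antisymm h5 infDist_nonneg
    exact (A.isCompact.isClosed.mem_iff_infDist_zero A.nonempty).2 h6

end Group

end Stmt11Aux


namespace Stmt11Alg

open Metric TopologicalSpace

variable {H : Type*} [Group H] {Q : Type*} [Group Q]

lemma comap_map_self (p : H →* Q) {S : Subgroup H} (hker : p.ker = S)
    {K : Subgroup H} (hK : S ≤ K) : (K.map p).comap p = K := by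
  rw [Subgroup.comap_map_eq, hker, sup_eq_left.mpr hK]

lemma map_inj (p : H →* Q) {S : Subgroup H} (hker : p.ker = S)
    {K L : Subgroup H} (hK : S ≤ K) (hL : S ≤ L) (h : K.map p = L.map p) : K = L := by
  rw [← comap_map_self p hker hK, ← comap_map_self p hker hL, h]

lemma map_conj_smul (p : H →* Q) (g : H) (K : Subgroup H) :
    (ConjAct.toConjAct g • K).map p = ConjAct.toConjAct (p g) • K.map p := by
  ext x
  simp only [Subgroup.mem_map, Subgroup.mem_smul_pointwise_iff_exists, ConjAct.smul_def,
    ConjAct.ofConjAct_toConjAct]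
  constructor
  · rintro ⟨-, ⟨k, hk, rfl⟩, rfl⟩
    exact ⟨p k, ⟨k, hk, rfl⟩, by simp [map_mul]⟩
  · rintro ⟨-, ⟨k, hk, rfl⟩, rfl⟩
    exact ⟨g * k * g⁻¹, ⟨k, hk, rfl⟩, by simp [map_mul]⟩

section Quot

variable [TopologicalSpace H] [IsTopologicalGroup H] [CompactSpace H] [T2Space H]
variable [TopologicalSpace Q] [IsTopologicalGroup Q] [T2Space Q]
variable (p : H →* Q) {S A B : Subgroup H}

/-- the restriction of `p` to a map `B → B.map p`. -/
def res (b : ↥B) : ↥(B.map p) := ⟨p b, Subgroup.mem_map_of_mem p b.2⟩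

lemma res_surj : Function.Surjective (res p (B := B)) := by
  rintro ⟨q, b, hb, rfl⟩; exact ⟨⟨b, hb⟩, rfl⟩

lemma res_cont (hpc : Continuous p) : Continuous (res p (B := B)) :=
  Continuous.subtype_mk (hpc.comp continuous_subtype_val) _

lemma normal_iff (hker : p.ker = S) (hSA : S ≤ A) (hAB : A ≤ B) :
    (A.subgroupOf B).Normal ↔ ((A.map p).subgroupOf (B.map p)).Normal := by
  constructor
  · intro hN
    constructor
    rintro ⟨-, a', ha', rfl⟩ hn ⟨-, b, hb, rfl⟩
    rw [Subgroup.mem_subgroupOf] at hn ⊢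
    obtain ⟨a, ha, ha2⟩ := hn
    have := hN.conj_mem ⟨a, hAB ha⟩ (by rwa [Subgroup.mem_subgroupOf]) ⟨b, hb⟩
    rw [Subgroup.mem_subgroupOf] at this
    refine ⟨b * a * b⁻¹, this, ?_⟩
    simp [map_mul, ha2]
  · intro hN
    constructor
    intro n hn g
    rw [Subgroup.mem_subgroupOf] at hn ⊢
    have hmem : res p n ∈ (A.map p).subgroupOf (B.map p) := by
      rw [Subgroup.mem_subgroupOf]
      exact ⟨(n : H), hn, rfl⟩
    have := hN.conj_mem (res p n) hmem (res p g)
    rw [Subgroup.mem_subgroupOf] at this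
    have h2 : ((res p g * res p n * (res p g)⁻¹ : ↥(B.map p)) : Q)
        = p ((g : H) * n * (g : H)⁻¹) := by simp [res, map_mul]
    rw [h2] at this
    have h3 : ((g : H) * n * (g : H)⁻¹) ∈ (A.map p).comap p := this
    rw [comap_map_self p hker hSA] at h3
    exact h3

lemma comm_iff (hker : p.ker = S) (hSA : S ≤ A) :
    (∀ x y : ↥B, (QuotientGroup.mk (x * y) : ↥B ⧸ A.subgroupOf B) = QuotientGroup.mk (y * x)) ↔
    (∀ x y : ↥(B.map p), (QuotientGroup.mk (x * y) :
        ↥(B.map p) ⧸ (A.map p).subgroupOf (B.map p)) = QuotientGroup.mk (y * x)) := by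
  constructor
  · intro hc x y
    obtain ⟨b, rfl⟩ := res_surj p (B := B) x
    obtain ⟨c, rfl⟩ := res_surj p (B := B) y
    rw [QuotientGroup.eq] at *
    have := hc b c
    rw [QuotientGroup.eq, Subgroup.mem_subgroupOf] at this
    rw [Subgroup.mem_subgroupOf]
    have h2 : (((res p b * res p c)⁻¹ * (res p c * res p b) : ↥(B.map p)) : Q)
        = p ((((b * c : ↥B))⁻¹ * (c * b : ↥B) : ↥B) : H) := by simp [res, map_mul]
    rw [h2]
    exact ⟨_, this, rfl⟩
  · intro hc x y
    have := hc (res p x) (res p y)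
    rw [QuotientGroup.eq, Subgroup.mem_subgroupOf] at this ⊢
    have h2 : (((res p x * res p y)⁻¹ * (res p y * res p x) : ↥(B.map p)) : Q)
        = p ((((x * y : ↥B))⁻¹ * (y * x : ↥B) : ↥B) : H) := by simp [res, map_mul]
    rw [h2] at this
    have h3 : ((((x * y : ↥B))⁻¹ * (y * x : ↥B) : ↥B) : H) ∈ (A.map p).comap p := this
    rwa [comap_map_self p hker hSA] at h3

lemma connected_iff (hpc : Continuous p) (hker : p.ker = S) (hSA : S ≤ A) (hAB : A ≤ B)
    (hA : IsClosed (A : Set H)) (hB : IsClosed (B : Set H))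
    (hNp : ((A.map p).subgroupOf (B.map p)).Normal) :
    ConnectedSpace (↥B ⧸ A.subgroupOf B) ↔
      ConnectedSpace (↥(B.map p) ⧸ (A.map p).subgroupOf (B.map p)) := by
  have hcompat : Relator.LiftFun (QuotientGroup.leftRel (A.subgroupOf B)).r
      (QuotientGroup.leftRel ((A.map p).subgroupOf (B.map p))).r (res p) (res p) := by
    intro b₁ b₂ h
    rw [QuotientGroup.leftRel_apply, Subgroup.mem_subgroupOf] at h ⊢
    refine ⟨((b₁⁻¹ * b₂ : ↥B) : H), h, ?_⟩
    simp [res, map_mul]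
  let ψ : (↥B ⧸ A.subgroupOf B) → (↥(B.map p) ⧸ (A.map p).subgroupOf (B.map p)) :=
    Quotient.map' (res p) hcompat
  have hψc : Continuous ψ := (res_cont p hpc).quotient_map' hcompat
  have hψs : Function.Surjective ψ := by
    intro q
    induction q using Quotient.inductionOn' with
    | h x =>
      obtain ⟨b, rfl⟩ := res_surj p (B := B) x
      exact ⟨Quotient.mk'' b, Quotient.map'_mk'' _ _ _⟩
  have hψi : Function.Injective ψ := by
    intro q₁ q₂ hq
    induction q₁ using Quotient.inductionOn' with
    | h x =>
      induction q₂ using Quotient.inductionOn' with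
      | h y =>
        simp only [ψ, Quotient.map'_mk''] at hq
        replace hq : (Quotient.mk'' (res p x) : ↥(B.map p) ⧸ (A.map p).subgroupOf (B.map p)) =
            Quotient.mk'' (res p y) := hq
        rw [Quotient.eq''] at hq
        rw [QuotientGroup.leftRel_apply, Subgroup.mem_subgroupOf] at hq
        have h2 : (((x⁻¹ * y : ↥B)) : H) ∈ (A.map p).comap p := by
          have : ((res p x)⁻¹ * res p y : ↥(B.map p)) = res p (x⁻¹ * y) := by
            apply Subtype.ext; simp [res, map_mul]
          rw [this] at hq
          exact hq
        rw [comap_map_self p hker hSA] at h2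
        rw [Quotient.eq'']
        rwa [QuotientGroup.leftRel_apply, Subgroup.mem_subgroupOf]
  haveI : CompactSpace ↥B := isCompact_iff_compactSpace.1 hB.isCompact
  haveI : IsClosed (((A.map p).subgroupOf (B.map p) : Subgroup ↥(B.map p)) : Set ↥(B.map p)) := by
    have : (((A.map p).subgroupOf (B.map p) : Subgroup ↥(B.map p)) : Set ↥(B.map p))
        = (Subtype.val : ↥(B.map p) → Q) ⁻¹' (A.map p : Set Q) := rfl
    rw [this]
    exact ((hA.isCompact.image hpc).isClosed).preimage continuous_subtype_val
  constructor
  · intro h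
    exact hψs.connectedSpace hψc
  · intro h
    let e := Continuous.homeoOfEquivCompactToT2 (f := Equiv.ofBijective ψ ⟨hψi, hψs⟩) hψc
    exact e.symm.surjective.connectedSpace e.symm.continuous

end Quot

end Stmt11Alg

namespace Stmt11Hyper

open Metric TopologicalSpace

variable {H : Type*} [MetricSpace H] [Group H] [CompactSpace H]

lemma toNC_injective : Function.Injective (ClosedSub.toNC (G := H)) := by
  intro K L h
  apply Subtype.ext
  apply SetLike.ext'
  exact congrArg (fun A : NonemptyCompacts H => (A : Set H)) h

lemma embedding_toNC : Topology.IsEmbedding (ClosedSub.toNC (G := H)) :=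
  ⟨⟨rfl⟩, toNC_injective⟩

lemma t2_closedSub : T2Space (ClosedSub H) := embedding_toNC.t2Space

variable [IsTopologicalGroup H] (S : Subgroup H)

lemma inducing_iota : Topology.IsInducing (fun K : SubSigma S => K.1.toNC) :=
  embedding_toNC.toIsInducing.comp Topology.IsInducing.subtypeVal

lemma range_iota : Set.range (fun K : SubSigma S => K.1.toNC) =
    {A : NonemptyCompacts H | (S : Set H) ⊆ (A : Set H) ∧
      ∀ x ∈ (A : Set H), ∀ y ∈ (A : Set H), x * y⁻¹ ∈ (A : Set H)} := by
  ext A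
  constructor
  · rintro ⟨K, rfl⟩
    exact ⟨K.2, fun x hx y hy => K.1.1.mul_mem hx (K.1.1.inv_mem hy)⟩
  · rintro ⟨hS, hmul⟩
    have h1 : (1 : H) ∈ (A : Set H) := hS S.one_mem
    have hinv : ∀ x ∈ (A : Set H), x⁻¹ ∈ (A : Set H) := fun x hx => by
      simpa using hmul 1 h1 x hx
    let K : Subgroup H :=
      { carrier := A
        one_mem' := h1
        inv_mem' := fun hx => hinv _ hx
        mul_mem' := fun hx hy => by simpa using hmul _ hx _ (hinv _ hy) }
    refine ⟨⟨⟨K, A.isCompact.isClosed⟩, hS⟩, ?_⟩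
    rfl

lemma compactSpace_subSigma : CompactSpace (SubSigma S) := by
  constructor
  rw [(inducing_iota S).isCompact_iff, Set.image_univ, range_iota S]
  exact (Stmt11Aux.isClosed_subLike S).isCompact

end Stmt11Hyper

/-- Let `H` be a compact Lie group (with bi-invariant metric
inducing its topology), `Σ` a closed normal subgroup and `p : H → H/Σ` the
quotient homomorphism (realised as a continuous surjective quotient map onto a
compact metrizable topological group `Q` with kernel `Σ`).  Then `K ↦ p(K)` is a
bijection from the closed subgroups of `H` containing `Σ` onto the closed
subgroups of `Q`; it is equivariant for conjugation; it is a homeomorphism for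
the Hausdorff metric topologies; it preserves cotoral inclusions; and it induces
a homeomorphism `Sub_Σ(H)/H ≅ Sub(H/Σ)/(H/Σ)` of quotient spaces of conjugacy
classes. -/
theorem stmt11 {E : Type*} [NormedAddCommGroup E] [NormedSpace ℝ E]
    [FiniteDimensional ℝ E]
    {M : Type*} [TopologicalSpace M] (I : ModelWithCorners ℝ E M)
    {H : Type*} [MetricSpace H] [Group H] [ChartedSpace M H] [LieGroup I (⊤ : ℕ∞) H]
    [CompactSpace H]
    (hinvL : ∀ g x y : H, dist (g * x) (g * y) = dist x y)
    (hinvR : ∀ g x y : H, dist (x * g) (y * g) = dist x y)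
    {Q : Type*} [MetricSpace Q] [Group Q] [IsTopologicalGroup Q] [CompactSpace Q]
    (p : H →* Q) (hpc : Continuous p) (hpq : IsQuotientMap (⇑p))
    (S : Subgroup H) (hSnormal : S.Normal) (hSclosed : IsClosed (S : Set H))
    (hker : p.ker = S) :
    Function.Bijective (fun K : SubSigma S => pushSub p hpc K.1) ∧
    (∀ (g : H) (K : Subgroup H),
      (ConjAct.toConjAct g • K).map p = ConjAct.toConjAct (p g) • K.map p) ∧
    IsHomeomorph (fun K : SubSigma S => pushSub p hpc K.1) ∧
    (∀ K K' : SubSigma S, K.1.1 ≤ K'.1.1 →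
      (ClosedSub.Cotoral K.1 K'.1 ↔
        ClosedSub.Cotoral (pushSub p hpc K.1) (pushSub p hpc K'.1))) ∧
    ∃ e : SubQuotSigma S ≃ₜ SubQuot Q,
      ∀ K : SubSigma S, e (Quotient.mk (conjSetoidSigma S) K) =
        Quotient.mk (conjSetoid Q) (pushSub p hpc K.1) :=  by
  haveI : IsTopologicalGroup H := topologicalGroup_of_lieGroup (I := I) (n := ((⊤ : ℕ∞) : WithTop ℕ∞))
  have hps : Function.Surjective p := hpq.surjective
  set f : SubSigma S → ClosedSub Q := fun K => pushSub p hpc K.1 with hfdef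
  have hinj : Function.Injective f := by
    intro K L h
    have h1 : K.1.1.map p = L.1.1.map p := congrArg Subtype.val h
    exact Subtype.ext (Subtype.ext (Stmt11Alg.map_inj p hker K.2 L.2 h1))
  have hsurj : Function.Surjective f := by
    intro L
    have hSle : S ≤ L.1.comap p := by
      intro s hs
      have h1 : p s = 1 := by rw [← MonoidHom.mem_ker, hker]; exact hs
      rw [Subgroup.mem_comap, h1]
      exact L.1.one_mem
    refine ⟨⟨⟨L.1.comap p, L.2.preimage hpc⟩, hSle⟩, ?_⟩
    exact Subtype.ext (Subgroup.map_comap_eq_self_of_surjective hps L.1)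
  have hbij : Function.Bijective f := ⟨hinj, hsurj⟩
  haveI : T2Space (ClosedSub Q) := Stmt11Hyper.t2_closedSub
  haveI : CompactSpace (SubSigma S) := Stmt11Hyper.compactSpace_subSigma S
  have hcomp : ClosedSub.toNC ∘ f = Stmt11Aux.ncMap (⇑p) hpc ∘
      (fun K : SubSigma S => K.1.toNC) := by
    funext K
    apply SetLike.ext'
    show ((K.1.1.map p : Subgroup Q) : Set Q) = ⇑p '' (K.1.1 : Set H)
    exact Subgroup.coe_map p K.1.1
  have hcont : Continuous f := by
    apply continuous_induced_rng.2
    rw [hcomp]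
    exact (Stmt11Aux.continuous_ncMap (⇑p) hpc).comp (Stmt11Hyper.inducing_iota S).continuous
  let e0 := Continuous.homeoOfEquivCompactToT2 (f := Equiv.ofBijective f hbij) hcont
  have hhomeo : IsHomeomorph f := e0.isHomeomorph
  have hcot : ∀ K K' : SubSigma S, K.1.1 ≤ K'.1.1 →
      (ClosedSub.Cotoral K.1 K'.1 ↔
        ClosedSub.Cotoral (pushSub p hpc K.1) (pushSub p hpc K'.1)) := by
    intro K K' hle
    constructor
    · rintro ⟨h1, h2, h3, h4⟩
      have hN := (Stmt11Alg.normal_iff p hker K.2 hle).1 h2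
      exact ⟨Subgroup.map_mono h1, hN,
        (Stmt11Alg.connected_iff p hpc hker K.2 hle K.1.2 K'.1.2 hN).1 h3,
        (Stmt11Alg.comm_iff p hker K.2).1 h4⟩
    · rintro ⟨h1, h2, h3, h4⟩
      have hN := (Stmt11Alg.normal_iff p hker K.2 hle).2 h2
      exact ⟨hle, hN,
        (Stmt11Alg.connected_iff p hpc hker K.2 hle K.1.2 K'.1.2 h2).2 h3,
        (Stmt11Alg.comm_iff p hker K.2).2 h4⟩
  have hcompat : ∀ K L : SubSigma S,
      (conjSetoidSigma S).r K L ↔ (conjSetoid Q).r (f K) (f L) := by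
    intro K L
    constructor
    · rintro ⟨g, hg⟩
      refine ⟨ConjAct.toConjAct (p (ConjAct.ofConjAct g)), ?_⟩
      show ConjAct.toConjAct (p (ConjAct.ofConjAct g)) • K.1.1.map p = L.1.1.map p
      rw [← Stmt11Alg.map_conj_smul p, ConjAct.toConjAct_ofConjAct, hg]
    · rintro ⟨q, hq⟩
      obtain ⟨g, hg⟩ := hps (ConjAct.ofConjAct q)
      refine ⟨ConjAct.toConjAct g, ?_⟩
      show ConjAct.toConjAct g • K.1.1 = L.1.1
      have hK2S : S ≤ ConjAct.toConjAct g • K.1.1 := by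
        intro s hs
        rw [Subgroup.mem_smul_pointwise_iff_exists]
        refine ⟨g⁻¹ * s * g, K.2 (by simpa using hSnormal.conj_mem s hs g⁻¹), ?_⟩
        rw [ConjAct.smul_def, ConjAct.ofConjAct_toConjAct]
        group
      have hq' : q • K.1.1.map p = L.1.1.map p := hq
      have hmapeq : (ConjAct.toConjAct g • K.1.1).map p = L.1.1.map p := by
        rw [Stmt11Alg.map_conj_smul p, hg, ConjAct.toConjAct_ofConjAct, hq']
      exact Stmt11Alg.map_inj p hker hK2S L.2 hmapeq
  let E : SubQuotSigma S ≃ SubQuot Q :=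
    Quotient.congr (Equiv.ofBijective f hbij) hcompat
  have hEmk : ∀ K : SubSigma S, E (Quotient.mk (conjSetoidSigma S) K) =
      Quotient.mk (conjSetoid Q) (f K) := fun K => rfl
  have hEc : Continuous E := by
    apply (isQuotientMap_quot_mk (r := (conjSetoidSigma S).r)).continuous_iff.2
    exact (continuous_quot_mk (r := (conjSetoid Q).r)).comp hcont
  have hEsymm : ∀ L : ClosedSub Q, E.symm (Quotient.mk (conjSetoid Q) L) =
      Quotient.mk (conjSetoidSigma S) ((Equiv.ofBijective f hbij).symm L) := by
    intro L
    apply E.injective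
    refine (E.apply_symm_apply (Quotient.mk (conjSetoid Q) L : SubQuot Q)).trans ?_
    rw [hEmk, show f ((Equiv.ofBijective f hbij).symm L) = L from
      (Equiv.ofBijective f hbij).apply_symm_apply L]
  have hEsc : Continuous E.symm := by
    apply (isQuotientMap_quot_mk (r := (conjSetoid Q).r)).continuous_iff.2
    have : (E.symm ∘ Quotient.mk (conjSetoid Q)) =
        (Quotient.mk (conjSetoidSigma S)) ∘ (Equiv.ofBijective f hbij).symm := by
      funext L
      exact hEsymm L
    show Continuous (E.symm ∘ Quotient.mk (conjSetoid Q))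
    rw [this]
    exact (continuous_quot_mk (r := (conjSetoidSigma S).r)).comp e0.symm.continuous
  refine ⟨hbij, fun g K => Stmt11Alg.map_conj_smul p g K, hhomeo, hcot,
    ⟨⟨E, hEc, hEsc⟩, fun K => rfl⟩⟩
end

section
/- Let Λ be a finitely generated free ℤ-module and let Λ₁, Λ₂ be submodules. Fix submodules Γ₁ ≤ Λ₁ and Γ₂ ≤ Λ₂. Then the set of submodules Γ ≤ Λ such that Γ ∩ Λ₁ = Γ₁, Γ ∩ Λ₂ = Γ₂, and Γ₁ + Γ₂ has finite index in Γ, is finite. (This gives the finiteness of the fibres of δ(Γ) = (Γ ∩ Λ₁, Γ ∩ Λ₂) over pairs for which the containment Γ₁ + Γ₂ ⊆ Γ is a rational isomorphism.) -/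
/-- Let `Λ` be a finitely generated free `ℤ`-module and `Λ₁, Λ₂`
submodules.  Fix submodules `Γ₁ ≤ Λ₁` and `Γ₂ ≤ Λ₂`.  Then the set of submodules
`Γ ≤ Λ` with `Γ ⊓ Λ₁ = Γ₁`, `Γ ⊓ Λ₂ = Γ₂` and such that `Γ₁ ⊔ Γ₂` has finite
index in `Γ` (i.e. the quotient group `Γ / (Γ₁ ⊔ Γ₂)` is finite) is finite. -/
theorem stmt13 {Λ : Type*} [AddCommGroup Λ] [Module ℤ Λ]
    [Module.Free ℤ Λ] [Module.Finite ℤ Λ]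
    (Λ₁ Λ₂ : Submodule ℤ Λ) (Γ₁ Γ₂ : Submodule ℤ Λ) (h₁ : Γ₁ ≤ Λ₁) (h₂ : Γ₂ ≤ Λ₂) :
    {Γ : Submodule ℤ Λ | Γ ⊓ Λ₁ = Γ₁ ∧ Γ ⊓ Λ₂ = Γ₂ ∧
      Finite (Γ.toAddSubgroup ⧸ ((Γ₁ ⊔ Γ₂).toAddSubgroup.addSubgroupOf
        Γ.toAddSubgroup))}.Finite := by
  set A : AddSubgroup Λ := (Γ₁ ⊔ Γ₂).toAddSubgroup with hA
  set π : Λ →+ Λ ⧸ A := QuotientAddGroup.mk' A with hπ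
  set T : AddSubgroup (Λ ⧸ A) := AddCommGroup.torsion (Λ ⧸ A) with hT
  -- T is finite
  have hQfg : AddGroup.FG (Λ ⧸ A) := by
    have hfg : AddGroup.FG Λ := by
      letI := AddCommGroup.uniqueIntModule (M := Λ)
      have h : Module.Finite ℤ Λ := ‹_›
      exact Module.Finite.iff_addGroup_fg.mp
        (Subsingleton.elim (‹Module ℤ Λ›) (AddCommGroup.toIntModule Λ) ▸ h)
    exact AddGroup.fg_of_surjective (f := π) (QuotientAddGroup.mk'_surjective A)
  have hQfin : Module.Finite ℤ (Λ ⧸ A) := Module.Finite.iff_addGroup_fg.mpr hQfg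
  have hNoeth : IsNoetherian ℤ (Λ ⧸ A) := isNoetherian_of_isNoetherianRing_of_finite ℤ _
  have hTfg : AddGroup.FG T := by
    have : Module.Finite ℤ (AddSubgroup.toIntSubmodule T) :=
      Module.Finite.iff_fg.mpr (IsNoetherian.noetherian _)
    exact Module.Finite.iff_addGroup_fg.mp this
  have hTtors : AddMonoid.IsTorsion T := fun x => by
    have hx := x.2
    rw [AddCommGroup.mem_torsion, isOfFinAddOrder_iff_nsmul_eq_zero] at hx
    obtain ⟨n, hn, hnx⟩ := hx
    rw [isOfFinAddOrder_iff_nsmul_eq_zero]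
    exact ⟨n, hn, Subtype.ext (by simpa using hnx)⟩
  have hTfin : Finite T := AddCommGroup.finite_of_fg_torsion T hTtors
  have hle : ∀ Γ ∈ {Γ : Submodule ℤ Λ | Γ ⊓ Λ₁ = Γ₁ ∧ Γ ⊓ Λ₂ = Γ₂ ∧
      Finite (Γ.toAddSubgroup ⧸ ((Γ₁ ⊔ Γ₂).toAddSubgroup.addSubgroupOf
        Γ.toAddSubgroup))}, Γ₁ ⊔ Γ₂ ≤ Γ := by
    rintro Γ ⟨e1, e2, _⟩
    exact sup_le (e1 ▸ inf_le_left) (e2 ▸ inf_le_left)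
  apply Set.Finite.of_finite_image
    (f := fun Γ : Submodule ℤ Λ => ((Γ.toAddSubgroup.map π : AddSubgroup (Λ ⧸ A)) : Set (Λ ⧸ A)))
  · apply (Set.Finite.finite_subsets (T : Set (Λ ⧸ A)).toFinite).subset
    rintro s ⟨Γ, hΓ, rfl⟩
    obtain ⟨e1, e2, hfin⟩ := hΓ
    rintro q ⟨x, hx, rfl⟩
    show π x ∈ T
    rw [hT, AddCommGroup.mem_torsion, isOfFinAddOrder_iff_nsmul_eq_zero]
    set ρ : Γ.toAddSubgroup →+ _ := QuotientAddGroup.mk' (A.addSubgroupOf Γ.toAddSubgroup) with hρ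
    have hford : IsOfFinAddOrder (ρ ⟨x, hx⟩) := isOfFinAddOrder_of_finite _
    rw [isOfFinAddOrder_iff_nsmul_eq_zero] at hford
    obtain ⟨n, hn, hnx⟩ := hford
    refine ⟨n, hn, ?_⟩
    have hnx' : ρ (n • (⟨x, hx⟩ : Γ.toAddSubgroup)) = 0 := by rw [map_nsmul]; exact hnx
    have hmem : n • x ∈ A := by
      have := (QuotientAddGroup.eq_zero_iff _).mp hnx'
      rw [AddSubgroup.mem_addSubgroupOf] at this
      simpa using this
    rw [← map_nsmul]
    exact (QuotientAddGroup.eq_zero_iff _).mpr hmem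
  · rintro Γ hΓ Γ' hΓ' heq
    have hsub : ∀ Δ : Submodule ℤ Λ, Γ₁ ⊔ Γ₂ ≤ Δ →
        (Δ.toAddSubgroup.map π).comap π = Δ.toAddSubgroup := by
      intro Δ hΔ
      rw [AddSubgroup.comap_map_eq, QuotientAddGroup.ker_mk']
      exact sup_eq_left.mpr (fun x hx => hΔ hx)
    have heq' : Γ.toAddSubgroup.map π = Γ'.toAddSubgroup.map π := SetLike.ext' heq
    have h := congrArg (AddSubgroup.comap π) heq'
    rw [hsub Γ (hle Γ hΓ), hsub Γ' (hle Γ' hΓ')] at h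
    ext x
    constructor
    · intro hx
      exact (h ▸ hx : x ∈ Γ'.toAddSubgroup)
    · intro hx
      exact (h ▸ hx : x ∈ Γ.toAddSubgroup)
end
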